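/- For every integer n ≥ 1, the real vector v = (14n(8n² + 27n + 16), 7n(n+2)(9n + β_n + 6), n(21n² − 3nβ_n + 126n − 2β_n + 84), 7n(9n + β_n + 6)) satisfies B_n v = ((nβ_n + 7n² − 2)/2) v; that is, v is an eigenvector of B_n with eigenvalue (nβ_n + 7n² − 2)/2. -/

import Mathlib

open Matrix

/-- The matrix `B_n` with real entries. -/
noncomputable def Bmat (n : ℤ) : Matrix (Fin 4) (Fin 4) ℝ :=
  !![8*(n:ℝ)^2+27*(n:ℝ)+17, -(n:ℝ)^2-5*(n:ℝ)-6, -21*(n:ℝ)^2-70*(n:ℝ)-42, -2*(n:ℝ)^2-6*(n:ℝ);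
     8*(n:ℝ)^2+19*(n:ℝ)+6,  -(n:ℝ)^2-4*(n:ℝ)-3, -21*(n:ℝ)^2-49*(n:ℝ)-14, -2*(n:ℝ)^2-4*(n:ℝ);
     8*(n:ℝ)+6,             -(n:ℝ)-2,           -21*(n:ℝ)-15,            -2*(n:ℝ);
     8*(n:ℝ)+3,             -(n:ℝ)-2,           -21*(n:ℝ)-7,             -2*(n:ℝ)+1]

/-!
With `λ = (nβ + 7n² − 2)/2`, each coordinate of `B_n v − λ v` is a polynomial in `n` and `β`
lying in the ideal generated by `β² − (49n² − 28)`; equivalently, `λ` is a root of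
`x² − (7n² − 2)x + 1`. So the eigenvector identity holds for any square root `s` of
`49n² − 28`.
-/

theorem Bmat_mulVec_eq_smul_of_sq_eq (n : ℤ) (s : ℝ) (hs : s ^ 2 = 49 * (n:ℝ) ^ 2 - 28) :
    Bmat n *ᵥ
      ![14*(n:ℝ)*(8*(n:ℝ)^2 + 27*(n:ℝ) + 16),
        7*(n:ℝ)*((n:ℝ)+2)*(9*(n:ℝ) + s + 6),
        (n:ℝ)*(21*(n:ℝ)^2 - 3*(n:ℝ)*s + 126*(n:ℝ) - 2*s + 84),
        7*(n:ℝ)*(9*(n:ℝ) + s + 6)]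
    = (((n:ℝ)*s + 7*(n:ℝ)^2 - 2)/2) •
      ![14*(n:ℝ)*(8*(n:ℝ)^2 + 27*(n:ℝ) + 16),
        7*(n:ℝ)*((n:ℝ)+2)*(9*(n:ℝ) + s + 6),
        (n:ℝ)*(21*(n:ℝ)^2 - 3*(n:ℝ)*s + 126*(n:ℝ) - 2*s + 84),
        7*(n:ℝ)*(9*(n:ℝ) + s + 6)] := by
  ext i
  fin_cases i <;> simp [Bmat, mulVec, dotProduct, Fin.sum_univ_four]
  · ring
  · linear_combination (-7/2*(n:ℝ)^3 - 7*(n:ℝ)^2) * hs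
  · linear_combination (3/2*(n:ℝ)^3 + (n:ℝ)^2) * hs
  · linear_combination (-7/2*(n:ℝ)^2) * hs

/-- For every integer `n ≥ 1`, with `β_n = √(49n² − 28)`, the vector
`v = (14n(8n² + 27n + 16), 7n(n+2)(9n + β_n + 6), n(21n² − 3nβ_n + 126n − 2β_n + 84),
7n(9n + β_n + 6))` is an eigenvector of `B_n` with eigenvalue `(nβ_n + 7n² − 2)/2`. -/
theorem statement_9 (n : ℤ) (hn : 1 ≤ n) :
    (Bmat n).mulVec
      ![14*(n:ℝ)*(8*(n:ℝ)^2 + 27*(n:ℝ) + 16),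
        7*(n:ℝ)*((n:ℝ)+2)*(9*(n:ℝ) + Real.sqrt (49*(n:ℝ)^2 - 28) + 6),
        (n:ℝ)*(21*(n:ℝ)^2 - 3*(n:ℝ)*Real.sqrt (49*(n:ℝ)^2 - 28) + 126*(n:ℝ)
          - 2*Real.sqrt (49*(n:ℝ)^2 - 28) + 84),
        7*(n:ℝ)*(9*(n:ℝ) + Real.sqrt (49*(n:ℝ)^2 - 28) + 6)]
    = (((n:ℝ)*Real.sqrt (49*(n:ℝ)^2 - 28) + 7*(n:ℝ)^2 - 2)/2) •
      ![14*(n:ℝ)*(8*(n:ℝ)^2 + 27*(n:ℝ) + 16),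
        7*(n:ℝ)*((n:ℝ)+2)*(9*(n:ℝ) + Real.sqrt (49*(n:ℝ)^2 - 28) + 6),
        (n:ℝ)*(21*(n:ℝ)^2 - 3*(n:ℝ)*Real.sqrt (49*(n:ℝ)^2 - 28) + 126*(n:ℝ)
          - 2*Real.sqrt (49*(n:ℝ)^2 - 28) + 84),
        7*(n:ℝ)*(9*(n:ℝ) + Real.sqrt (49*(n:ℝ)^2 - 28) + 6)] := by
  have hn' : (1:ℝ) ≤ n := by exact_mod_cast hn
  have hdisc : (0:ℝ) ≤ 49 * (n:ℝ) ^ 2 - 28 := by nlinarith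
  exact Bmat_mulVec_eq_smul_of_sq_eq n _ (Real.sq_sqrt hdisc)
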